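/- arXiv:1807.02582 — 3 statements merged into one kernel-verified Lean document; each statement's English description precedes it below -/
import Mathlib

section
/- Let k be a kernel on X, X = (x_1,...,x_n) points with invertible kernel matrix k_XX, and f : X → R. Then the function f̂(x) = k_{xX} k_{XX}^{-1} f_X (where f_X = (f(x_1),...,f(x_n))^T and k_{xX} = (k(x,x_1),...,k(x,x_n))) is the unique solution to the problem: minimize ‖g‖_{H_k} over g ∈ H_k subject to g(x_i) = f(x_i) for i = 1,...,n. -/
open scoped RealInnerProductSpace
open Matrix

/-!
The interpolant `f̂ = ∑ i, α i • K (x i)` lies in the span of the representers `K (x i)`, and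
the choice `α = k_XX⁻¹ f_X` makes it satisfy the constraints. Any other interpolant `g` has the
same inner products with every `K (x i)`, so `g - f̂` is orthogonal to `f̂`, and Pythagoras gives
`‖g‖² = ‖f̂‖² + ‖g - f̂‖²`.
-/

section Interpolation

variable {ι E : Type*} [Fintype ι] [NormedAddCommGroup E] [InnerProductSpace ℝ E]

theorem inner_sum_smul_eq_gram_mulVec (v : ι → E) (α : ι → ℝ) (j : ι) :
    ⟪∑ i, α i • v i, v j⟫ = (gram ℝ v *ᵥ α) j := by
  simp only [sum_inner, real_inner_smul_left, mulVec, dotProduct, gram_apply]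
  exact Finset.sum_congr rfl fun i _ => by rw [real_inner_comm, mul_comm]

theorem inner_sum_gram_inv_mulVec_smul [DecidableEq ι] {v : ι → E} (hv : IsUnit (gram ℝ v))
    (y : ι → ℝ) (j : ι) : ⟪∑ i, ((gram ℝ v)⁻¹ *ᵥ y) i • v i, v j⟫ = y j := by
  rw [inner_sum_smul_eq_gram_mulVec, mulVec_mulVec,
    mul_nonsing_inv _ ((isUnit_iff_isUnit_det _).mp hv), one_mulVec]

theorem inner_sub_sum_smul_eq_zero {v : ι → E} {g h : E} (hgh : ∀ i, ⟪g, v i⟫ = ⟪h, v i⟫)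
    (α : ι → ℝ) : ⟪g - h, ∑ i, α i • v i⟫ = 0 := by
  simp [inner_sum, real_inner_smul_right, inner_sub_left, hgh]

theorem norm_le_and_eq_of_inner_sub_self_eq_zero {g h : E} (hgh : ⟪g - h, h⟫ = 0) :
    ‖h‖ ≤ ‖g‖ ∧ (‖g‖ = ‖h‖ → g = h) := by
  have hpyth : ‖g‖ * ‖g‖ = ‖h‖ * ‖h‖ + ‖g - h‖ * ‖g - h‖ := by
    have := norm_add_sq_eq_norm_sq_add_norm_sq_real (real_inner_comm h (g - h) ▸ hgh)
    rwa [add_sub_cancel] at this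
  refine ⟨mul_self_le_mul_self_iff (norm_nonneg h) (norm_nonneg g) |>.mpr ?_, fun hnorm => ?_⟩
  · exact hpyth ▸ le_add_of_nonneg_right (mul_self_nonneg _)
  · rw [hnorm, left_eq_add, mul_self_eq_zero, norm_sub_eq_zero_iff] at hpyth
    exact hpyth

end Interpolation

theorem stmt_1_general {X : Type*} {H : Type*} [NormedAddCommGroup H]
    [InnerProductSpace ℝ H] (K : X → H) (n : ℕ) (x : Fin n → X) (f : X → ℝ)
    (kXX : Matrix (Fin n) (Fin n) ℝ)
    (hkXX : ∀ i j, kXX i j = ⟪K (x i), K (x j)⟫)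
    (hinv : IsUnit kXX)
    (α : Fin n → ℝ) (hα : α = kXX⁻¹ *ᵥ fun i => f (x i))
    (fhat : H) (hfhat : fhat = ∑ i, α i • K (x i)) :
    (∀ i, ⟪fhat, K (x i)⟫ = f (x i)) ∧
    ∀ g : H, (∀ i, ⟪g, K (x i)⟫ = f (x i)) →
      ‖fhat‖ ≤ ‖g‖ ∧ (‖g‖ = ‖fhat‖ → g = fhat) := by
  have hgram : kXX = gram ℝ (fun i => K (x i)) := Matrix.ext hkXX
  subst hgram
  have hinterp : ∀ i, ⟪fhat, K (x i)⟫ = f (x i) := by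
    rw [hfhat, hα]
    exact inner_sum_gram_inv_mulVec_smul hinv _
  refine ⟨hinterp, fun g hg => norm_le_and_eq_of_inner_sub_self_eq_zero ?_⟩
  have horth := inner_sub_sum_smul_eq_zero (fun i => (hg i).trans (hinterp i).symm) α
  rwa [← hfhat] at horth

/-- Kernel interpolation: with `k` a kernel on `X` with RKHS `H_k`
(represented by a Hilbert space `H` with canonical feature map `K x = k(·,x)`, so that
`g(x) = ⟪g, K x⟫` by the reproducing property), points `x 1, ..., x n` with invertible
kernel matrix `k_XX`, and a target function `f : X → ℝ`, the function
`f̂ = ∑ i, α i • k(·, x i)` with `α = k_XX⁻¹ f_X` is the unique solution to: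
minimize `‖g‖_{H_k}` over `g ∈ H_k` subject to `g (x i) = f (x i)` for all `i`. -/
theorem stmt_1 {X : Type*} [Nonempty X] {H : Type*} [NormedAddCommGroup H]
    [InnerProductSpace ℝ H] (K : X → H) (n : ℕ) (x : Fin n → X) (f : X → ℝ)
    (kXX : Matrix (Fin n) (Fin n) ℝ)
    (hkXX : ∀ i j, kXX i j = ⟪K (x i), K (x j)⟫)
    (hinv : IsUnit kXX)
    (α : Fin n → ℝ) (hα : α = kXX⁻¹ *ᵥ fun i => f (x i))
    (fhat : H) (hfhat : fhat = ∑ i, α i • K (x i)) :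
    (∀ i, ⟪fhat, K (x i)⟫ = f (x i)) ∧
    ∀ g : H, (∀ i, ⟪g, K (x i)⟫ = f (x i)) →
      ‖fhat‖ ≤ ‖g‖ ∧ (‖g‖ = ‖fhat‖ → g = fhat) :=
  stmt_1_general K n x f kXX hkXX hinv α hα fhat hfhat
end

section
/- Let k be a kernel on X, σ > 0, and define the kernel k^σ(x,y) = k(x,y) + σ² δ(x,y) where δ(x,y) = 1 if x = y and 0 otherwise. Let w^σ(x) = (k_XX + σ² I_n)^{-1} k_{Xx} ∈ R^n, and let k̄(x,x) = k(x,x) - k_{xX}(k_XX + σ² I_n)^{-1} k_{Xx} be the GP posterior variance. Then for any x ∈ X with x ≠ x_i for all i, sqrt(k̄(x,x) + σ²) equals the supremum over g in the unit ball of the RKHS H_{k^σ} of g(x) - ∑_{i=1}^n w_i^σ(x) g(x_i). -/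
/-!
The functional `g ↦ g(t) - ∑ i, w i * g (x i)` on `H_{k^σ}` is `g ↦ ⟪g, v⟫` with
`v = Kσ t - ∑ i, w i • Kσ (x i)`, so its supremum over the unit ball is `‖v‖`.
Since `t` differs from every `x i`, the Gram matrix of `Kσ` on `(t, x)` is that of `K` plus
`σ² I`, so `w` solves the normal equations `gram (Kσ ∘ x) *ᵥ w = (⟪Kσ (x i), Kσ t⟫)ᵢ`, and
then `‖v‖²` is the usual least-squares residual `k(t,t) + σ² - k_{tX} w = k̄(t,t) + σ²`.
-/

open scoped RealInnerProductSpace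
open Matrix

section InnerProductSpace

variable {E : Type*} [NormedAddCommGroup E] [InnerProductSpace ℝ E]

lemma isGreatest_inner_of_norm_le_one (v : E) :
    IsGreatest {s : ℝ | ∃ g : E, ‖g‖ ≤ 1 ∧ s = ⟪g, v⟫} ‖v‖ := by
  constructor
  · rcases eq_or_ne v 0 with rfl | hv
    · exact ⟨0, by simp⟩
    have hv' : ‖v‖ ≠ 0 := norm_ne_zero_iff.2 hv
    refine ⟨‖v‖⁻¹ • v, ?_, ?_⟩
    · simp [norm_smul, inv_mul_cancel₀ hv']
    · rw [real_inner_smul_left, real_inner_self_eq_norm_mul_norm, inv_mul_cancel_left₀ hv']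
  · rintro s ⟨g, hg, rfl⟩
    calc ⟪g, v⟫ ≤ ‖g‖ * ‖v‖ := real_inner_le_norm g v
      _ ≤ 1 * ‖v‖ := by gcongr
      _ = ‖v‖ := one_mul _

/-- `hw` are the normal equations of the least-squares approximation of `u` by the `v i`. -/
lemma norm_sub_sum_smul_sq_of_gram_mulVec {ι : Type*} [Fintype ι] (u : E) (v : ι → E)
    (w : ι → ℝ) (hw : gram ℝ v *ᵥ w = fun i => ⟪v i, u⟫) :
    ‖u - ∑ i, w i • v i‖ ^ 2 = ‖u‖ ^ 2 - w ⬝ᵥ fun i => ⟪v i, u⟫ := by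
  have hcross : ⟪u, ∑ i, w i • v i⟫ = w ⬝ᵥ fun i => ⟪v i, u⟫ := by
    simp only [inner_sum, real_inner_smul_right, dotProduct, real_inner_comm]
  have hquad : ‖∑ i, w i • v i‖ ^ 2 = w ⬝ᵥ fun i => ⟪v i, u⟫ := by
    rw [← hw, ← real_inner_self_eq_norm_sq, ← star_dotProduct_gram_mulVec, star_trivial]
  rw [norm_sub_sq_real, hcross, hquad]
  ring

lemma gram_eq_add_smul_one_of_inner_eq {X ι F : Type*} [DecidableEq X] [DecidableEq ι]
    [NormedAddCommGroup F] [InnerProductSpace ℝ F] (K : X → F) (Kσ : X → E) (σ : ℝ)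
    (hGram : ∀ x y : X, ⟪Kσ x, Kσ y⟫ = ⟪K x, K y⟫ + σ ^ 2 * (if x = y then 1 else 0))
    {x : ι → X} (hx : Function.Injective x) :
    gram ℝ (fun i => Kσ (x i)) = gram ℝ (fun i => K (x i)) + σ ^ 2 • (1 : Matrix ι ι ℝ) := by
  ext i j
  rw [gram_apply, hGram, Matrix.add_apply, Matrix.smul_apply, one_apply, gram_apply]
  by_cases hij : i = j <;> simp [hij, hx.ne]

end InnerProductSpace

theorem stmt_5_general {X : Type*} [DecidableEq X]
    {H G : Type*} [NormedAddCommGroup H] [InnerProductSpace ℝ H]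
    [NormedAddCommGroup G] [InnerProductSpace ℝ G]
    (K : X → H) (Kσ : X → G) (σ : ℝ)
    (hGram : ∀ x y : X, ⟪Kσ x, Kσ y⟫ = ⟪K x, K y⟫ + σ ^ 2 * (if x = y then 1 else 0))
    (n : ℕ) (x : Fin n → X) (hx : Function.Injective x)
    (t : X) (ht : ∀ i, t ≠ x i)
    (kXX : Matrix (Fin n) (Fin n) ℝ) (hkXX : ∀ i j, kXX i j = ⟪K (x i), K (x j)⟫)
    (hinv : IsUnit (kXX + σ ^ 2 • (1 : Matrix (Fin n) (Fin n) ℝ)))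
    (w : Fin n → ℝ)
    (hw : w = (kXX + σ ^ 2 • (1 : Matrix (Fin n) (Fin n) ℝ))⁻¹ *ᵥ fun i => ⟪K (x i), K t⟫)
    (kbar : ℝ) (hkbar : kbar = ⟪K t, K t⟫ - (fun i => ⟪K t, K (x i)⟫) ⬝ᵥ w) :
    IsLUB {s : ℝ | ∃ g : G, ‖g‖ ≤ 1 ∧ s = ⟪g, Kσ t⟫ - ∑ i, w i * ⟪g, Kσ (x i)⟫}
      (Real.sqrt (kbar + σ ^ 2)) := by
  set v : G := Kσ t - ∑ i, w i • Kσ (x i)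
  have hgram : gram ℝ (fun i => Kσ (x i)) = kXX + σ ^ 2 • (1 : Matrix (Fin n) (Fin n) ℝ) := by
    have hkXX' : gram ℝ (fun i => K (x i)) = kXX := (Matrix.ext hkXX).symm
    rw [gram_eq_add_smul_one_of_inner_eq K Kσ σ hGram hx, hkXX']
  have hcross : (fun i => ⟪Kσ (x i), Kσ t⟫) = fun i => ⟪K (x i), K t⟫ := by
    ext i; simp [hGram, (ht i).symm]
  have hnormal : gram ℝ (fun i => Kσ (x i)) *ᵥ w = fun i => ⟪Kσ (x i), Kσ t⟫ := by
    rw [hgram, hcross, hw, mulVec_mulVec, mul_nonsing_inv _ ((isUnit_iff_isUnit_det _).1 hinv),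
      one_mulVec]
  have hnorm_sq : ‖v‖ ^ 2 = kbar + σ ^ 2 := by
    have hres : ‖v‖ ^ 2 = ‖Kσ t‖ ^ 2 - w ⬝ᵥ fun i => ⟪Kσ (x i), Kσ t⟫ :=
      norm_sub_sum_smul_sq_of_gram_mulVec _ _ w hnormal
    rw [hres, ← real_inner_self_eq_norm_sq, hGram, hcross, hkbar, dotProduct_comm]
    simp only [if_true, mul_one, real_inner_comm (K t)]
    ring
  have hset : {s : ℝ | ∃ g : G, ‖g‖ ≤ 1 ∧ s = ⟪g, Kσ t⟫ - ∑ i, w i * ⟪g, Kσ (x i)⟫}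
      = {s : ℝ | ∃ g : G, ‖g‖ ≤ 1 ∧ s = ⟪g, v⟫} := by
    simp only [v, inner_sub_right, inner_sum, real_inner_smul_right]
  rw [hset, ← hnorm_sq, Real.sqrt_sq (norm_nonneg v)]
  exact (isGreatest_inner_of_norm_le_one v).isLUB

/-- Worst-case interpretation of the GP posterior variance with noise.
Let `k` be a kernel on `X` (represented by a Hilbert space `H` with feature map `K`),
`σ > 0`, and let `k^σ(x,y) = k(x,y) + σ² δ(x,y)` be the noise-augmented kernel, whose
RKHS is represented by a Hilbert space `G` with feature map `Kσ` satisfying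
`⟪Kσ x, Kσ y⟫ = k(x,y) + σ² δ(x,y)` (so `g(x) = ⟪g, Kσ x⟫` for `g ∈ H_{k^σ}`).
With distinct points `x 1, ..., x n`, weights `w = (k_XX + σ² I)⁻¹ k_{Xt}` and posterior
variance `k̄(t,t) = k(t,t) - k_{tX} (k_XX + σ² I)⁻¹ k_{Xt}`, for any `t` distinct from all
`x i` the quantity `sqrt (k̄(t,t) + σ²)` is the supremum over `g` in the unit ball of
`H_{k^σ}` of `g(t) - ∑ i, w i * g (x i)`. -/
theorem stmt_5 {X : Type*} [Nonempty X] [DecidableEq X]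
    {H G : Type*} [NormedAddCommGroup H] [InnerProductSpace ℝ H]
    [NormedAddCommGroup G] [InnerProductSpace ℝ G]
    (K : X → H) (Kσ : X → G) (σ : ℝ) (hσ : 0 < σ)
    (hGram : ∀ x y : X, ⟪Kσ x, Kσ y⟫ = ⟪K x, K y⟫ + σ ^ 2 * (if x = y then 1 else 0))
    (n : ℕ) (x : Fin n → X) (hx : Function.Injective x)
    (t : X) (ht : ∀ i, t ≠ x i)
    (kXX : Matrix (Fin n) (Fin n) ℝ) (hkXX : ∀ i j, kXX i j = ⟪K (x i), K (x j)⟫)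
    (hinv : IsUnit (kXX + σ ^ 2 • (1 : Matrix (Fin n) (Fin n) ℝ)))
    (w : Fin n → ℝ)
    (hw : w = (kXX + σ ^ 2 • (1 : Matrix (Fin n) (Fin n) ℝ))⁻¹ *ᵥ fun i => ⟪K (x i), K t⟫)
    (kbar : ℝ) (hkbar : kbar = ⟪K t, K t⟫ - (fun i => ⟪K t, K (x i)⟫) ⬝ᵥ w) :
    IsLUB {s : ℝ | ∃ g : G, ‖g‖ ≤ 1 ∧ s = ⟪g, Kσ t⟫ - ∑ i, w i * ⟪g, Kσ (x i)⟫}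
      (Real.sqrt (kbar + σ ^ 2)) :=
  stmt_5_general K Kσ σ hGram n x hx t ht kXX hkXX hinv w hw kbar hkbar
end

section
/- Let k be a bounded characteristic kernel on a measurable space X. Then for any probability measures P and Q on X: P = Q if and only if ∫ f dP = ∫ f dQ holds almost surely for f ~ GP(0,k). -/
open MeasureTheory
open scoped RealInnerProductSpace

/-!
Let `S` be the set of points `x` at which `F · x` is square integrable. Off `S` the covariance
identity forces `K x = 0`, and since `K` is characteristic every probability measure with kernel
mean `0` is the Dirac mass at such a point `a`; hence `P` and `Q` restricted to `Sᶜ` are multiples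
of `δ_a`. On `S` the second moments are bounded by `Cb ^ 2`, so Fubini gives
`⟪μ_P - μ_Q, K x⟫ = E[(∫_S F dP - ∫_S F dQ) F x]` for `x ∈ S`. When `∫ F dP = ∫ F dQ` a.s., the
first factor is a.s. a multiple of `F a`, and `E[F a F x] = ⟪K a, K x⟫ = 0`. So `μ_P - μ_Q` is
orthogonal to every `K x`, hence to itself.
-/

open ProbabilityTheory

section Dirac

variable {α E : Type*} [MeasurableSpace α] [NormedAddCommGroup E] [NormedSpace ℝ E]
    [CompleteSpace E]

theorem integral_dirac_of_aestronglyMeasurable {f : α → E} {a : α}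
    (hf : AEStronglyMeasurable f (Measure.dirac a)) : ∫ x, f x ∂Measure.dirac a = f a := by
  have hmk : f a = hf.mk f a := by
    by_contra hne
    have hnull := ae_iff.mp hf.ae_eq_mk
    rw [Measure.dirac_apply_of_mem hne] at hnull
    exact one_ne_zero hnull
  rw [integral_congr_ae hf.ae_eq_mk, integral_dirac' _ _ hf.stronglyMeasurable_mk, hmk]

theorem integral_dirac_eq_zero {f : α → E} {a : α} (ha : f a = 0) :
    ∫ x, f x ∂Measure.dirac a = 0 := by
  by_cases hf : Integrable f (Measure.dirac a)
  · rw [integral_dirac_of_aestronglyMeasurable hf.1, ha]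
  · exact integral_undef hf

end Dirac

section Characteristic

variable {X H : Type*} [MeasurableSpace X] [NormedAddCommGroup H] [InnerProductSpace ℝ H]

def IsCharacteristic (K : X → H) : Prop :=
  ∀ P Q : Measure X, IsProbabilityMeasure P → IsProbabilityMeasure Q →
    (∫ x, K x ∂P) = (∫ x, K x ∂Q) → P = Q

variable [CompleteSpace H] {K : X → H}

theorem IsCharacteristic.eq_dirac (hK : IsCharacteristic K) {a : X} (ha : K a = 0)
    (ν : Measure X) [IsProbabilityMeasure ν] (hν : (∫ x, K x ∂ν) = 0) : ν = Measure.dirac a :=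
  hK ν _ inferInstance inferInstance (by rw [hν, integral_dirac_eq_zero ha])

theorem IsCharacteristic.restrict_eq_smul_dirac (hK : IsCharacteristic K) {a : X} (ha : K a = 0)
    {T : Set X} (hKT : ∀ x ∈ T, K x = 0) (μ : Measure X)
    [IsFiniteMeasure μ] : μ.restrict T = μ T • Measure.dirac a := by
  by_cases hμT : μ T = 0
  · rw [Measure.restrict_eq_zero.mpr hμT, hμT, zero_smul]
  have := cond_isProbabilityMeasure (s := T) hμT
  have hcond : μ[|T] = Measure.dirac a := hK.eq_dirac ha _ <| by
    rw [ProbabilityTheory.cond, integral_smul_measure, setIntegral_eq_zero_of_forall_eq_zero hKT, smul_zero]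
  rw [← hcond, ProbabilityTheory.cond, smul_smul, ENNReal.mul_inv_cancel hμT (measure_ne_top μ T), one_smul]

end Characteristic

theorem integral_eq_of_inner_sub_eq_zero {X H : Type*} [MeasurableSpace X] [NormedAddCommGroup H]
    [InnerProductSpace ℝ H] [CompleteSpace H] {K : X → H} {P Q : Measure X}
    (hKP : Integrable K P) (hKQ : Integrable K Q)
    (h : ∀ x, ⟪(∫ y, K y ∂P) - ∫ y, K y ∂Q, K x⟫ = 0) : ∫ x, K x ∂P = ∫ x, K x ∂Q := by
  rw [← sub_eq_zero, ← inner_self_eq_zero (𝕜 := ℝ)]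
  rw [inner_sub_right]
  rw [← integral_inner hKP, ← integral_inner hKQ]
  simp [h]

section GaussianProcess

variable {X Ω H : Type*} [MeasurableSpace Ω] {Pr : Measure Ω} {F : Ω → X → ℝ}
  [NormedAddCommGroup H] [InnerProductSpace ℝ H] {K : X → H}

def finiteSecondMomentSet (F : Ω → X → ℝ) (Pr : Measure Ω) : Set X :=
  {x | MemLp (fun ω => F ω x) 2 Pr}

theorem integral_sq_eq_norm_sq (hcov : ∀ x y, ∫ ω, F ω x * F ω y ∂Pr = ⟪K x, K y⟫) (x : X) :
    ∫ ω, F ω x ^ 2 ∂Pr = ‖K x‖ ^ 2 := by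
  simp_rw [sq, hcov, real_inner_self_eq_norm_mul_norm]

variable [MeasurableSpace X]

theorem measurableSet_finiteSecondMomentSet [SFinite Pr] (hF : Measurable (Function.uncurry F)) :
    MeasurableSet (finiteSecondMomentSet F Pr) := by
  have hsq : StronglyMeasurable (Function.uncurry fun x ω => F ω x ^ 2) :=
    ((hF.comp measurable_swap).pow_const 2).stronglyMeasurable
  have hset : finiteSecondMomentSet F Pr = {x | Integrable (fun ω => F ω x ^ 2) Pr} :=
    Set.ext fun _ => memLp_two_iff_integrable_sq hF.of_uncurry_right.aestronglyMeasurable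
  exact hset ▸ measurableSet_integrable hsq

-- Off the set, `hcov x x` integrates a non-integrable function, whose integral is `0` by convention.
theorem eq_zero_of_notMem_finiteSecondMomentSet (hF : Measurable (Function.uncurry F))
    (hcov : ∀ x y, ∫ ω, F ω x * F ω y ∂Pr = ⟪K x, K y⟫) {x : X}
    (hx : x ∉ finiteSecondMomentSet F Pr) : K x = 0 := by
  have hsq : ¬ Integrable (fun ω => F ω x ^ 2) Pr :=
    (memLp_two_iff_integrable_sq hF.of_uncurry_right.aestronglyMeasurable).not.mp hx
  rw [← norm_eq_zero, ← sq_eq_zero_iff (M₀ := ℝ), ← integral_sq_eq_norm_sq hcov, integral_undef hsq]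

theorem integrable_prod_mul_of_mem [SFinite Pr] (hF : Measurable (Function.uncurry F))
    (hcov : ∀ x y, ∫ ω, F ω x * F ω y ∂Pr = ⟪K x, K y⟫) {Cb : ℝ} (hbd : ∀ x, ‖K x‖ ≤ Cb)
    (μ : Measure X) [IsFiniteMeasure μ] {x : X} (hx : x ∈ finiteSecondMomentSet F Pr) :
    Integrable (Function.uncurry fun y ω => F ω y * F ω x)
      ((μ.restrict (finiteSecondMomentSet F Pr)).prod Pr) := by
  have hS := measurableSet_finiteSecondMomentSet (Pr := Pr) hF
  have hmeas : Measurable (Function.uncurry fun y ω => F ω y * F ω x) :=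
    (hF.comp measurable_swap).mul (hF.comp (measurable_snd.prodMk measurable_const))
  rw [integrable_prod_iff hmeas.aestronglyMeasurable]
  constructor
  · filter_upwards [ae_restrict_mem hS] with y hy using hy.integrable_mul hx
  · refine Integrable.mono' (integrable_const (Cb ^ 2 + ‖K x‖ ^ 2))
      hmeas.stronglyMeasurable.norm.integral_prod_right'.aestronglyMeasurable ?_
    filter_upwards [ae_restrict_mem hS] with y (hy : MemLp _ 2 Pr)
    rw [Real.norm_of_nonneg (integral_nonneg fun _ => norm_nonneg _)]
    calc ∫ ω, ‖F ω y * F ω x‖ ∂Pr ≤ ∫ ω, (F ω y ^ 2 + F ω x ^ 2) ∂Pr := by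
          refine integral_mono (hy.integrable_mul hx).norm
            (hy.integrable_sq.add hx.integrable_sq) fun ω => ?_
          rw [norm_mul, Real.norm_eq_abs, Real.norm_eq_abs, ← sq_abs (F ω y), ← sq_abs (F ω x)]
          nlinarith [two_mul_le_add_sq |F ω y| |F ω x|, abs_nonneg (F ω y), abs_nonneg (F ω x)]
      _ = ‖K y‖ ^ 2 + ‖K x‖ ^ 2 := by
          rw [integral_add hy.integrable_sq hx.integrable_sq, integral_sq_eq_norm_sq hcov,
            integral_sq_eq_norm_sq hcov]
      _ ≤ Cb ^ 2 + ‖K x‖ ^ 2 := by gcongr; exact hbd y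

theorem integral_setIntegral_mul_eq_inner [SFinite Pr] [CompleteSpace H]
    (hF : Measurable (Function.uncurry F))
    (hcov : ∀ x y, ∫ ω, F ω x * F ω y ∂Pr = ⟪K x, K y⟫) {Cb : ℝ} (hbd : ∀ x, ‖K x‖ ≤ Cb)
    (μ : Measure X) [IsFiniteMeasure μ] (hKμ : Integrable K μ) {x : X}
    (hx : x ∈ finiteSecondMomentSet F Pr) :
    Integrable (fun ω => (∫ y in finiteSecondMomentSet F Pr, F ω y ∂μ) * F ω x) Pr ∧
      ∫ ω, (∫ y in finiteSecondMomentSet F Pr, F ω y ∂μ) * F ω x ∂Pr = ⟪∫ y, K y ∂μ, K x⟫ := by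
  have hprod := integrable_prod_mul_of_mem hF hcov hbd μ hx
  have hKS : ∀ y ∉ finiteSecondMomentSet F Pr, K y = 0 := fun _ =>
    eq_zero_of_notMem_finiteSecondMomentSet hF hcov
  simp_rw [← integral_mul_const]
  refine ⟨hprod.integral_prod_right, ?_⟩
  calc ∫ ω, ∫ y in finiteSecondMomentSet F Pr, F ω y * F ω x ∂μ ∂Pr
      = ∫ y in finiteSecondMomentSet F Pr, ⟪K x, K y⟫ ∂μ := by
        rw [← integral_integral_swap hprod]
        simp_rw [hcov, real_inner_comm (K x)]
    _ = ⟪∫ y, K y ∂μ, K x⟫ := by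
        rw [integral_inner hKμ.restrict, setIntegral_eq_integral_of_forall_compl_eq_zero hKS,
          real_inner_comm]

theorem IsCharacteristic.exists_setIntegral_eq_mul [CompleteSpace H] (hK : IsCharacteristic K)
    (hF : ∀ ω, Measurable (F ω)) (hcov : ∀ x y, ∫ ω, F ω x * F ω y ∂Pr = ⟪K x, K y⟫)
    {T : Set X} (hKT : ∀ y ∈ T, K y = 0) :
    ∃ e : Ω → ℝ, (∀ x, ∫ ω, e ω * F ω x ∂Pr = 0) ∧
      ∀ (μ : Measure X) [IsFiniteMeasure μ] (ω : Ω), ∫ y in T, F ω y ∂μ = μ.real T * e ω := by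
  rcases T.eq_empty_or_nonempty with rfl | ⟨a, ha⟩
  · exact ⟨0, fun x => by simp, fun μ _ ω => by simp⟩
  refine ⟨fun ω => F ω a, fun x => by rw [hcov, hKT a ha, inner_zero_left], fun μ _ ω => ?_⟩
  rw [hK.restrict_eq_smul_dirac (hKT a ha) hKT, integral_smul_measure,
    integral_dirac_of_aestronglyMeasurable (hF ω).aestronglyMeasurable, smul_eq_mul,
    measureReal_def]

end GaussianProcess

/-- Characteristic kernels and Gaussian processes. Let `k` be a bounded
characteristic kernel on a measurable space `X` (represented by a Hilbert space `H` with
canonical feature map `K`, `k x y = ⟪K x, K y⟫`; characteristic means the kernel mean map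
`P ↦ ∫ K x ∂P` is injective on probability measures), and let `F : Ω → X → ℝ` be a
zero-mean Gaussian process with covariance `k`, i.e. `∫ ω, F ω x * F ω y ∂Pr = k x y`.
Then for probability measures `P`, `Q` on `X`: `P = Q` iff `∫ f dP = ∫ f dQ` holds almost
surely for `f ~ GP(0,k)`. -/
theorem stmt_14 {X : Type*} [MeasurableSpace X] {H : Type*} [NormedAddCommGroup H]
    [InnerProductSpace ℝ H] [CompleteSpace H]
    (K : X → H) (Cb : ℝ) (hbd : ∀ x, ‖K x‖ ≤ Cb)
    (hchar : ∀ P Q : Measure X, IsProbabilityMeasure P → IsProbabilityMeasure Q →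
      (∫ x, K x ∂P) = (∫ x, K x ∂Q) → P = Q)
    (P Q : Measure X) [IsProbabilityMeasure P] [IsProbabilityMeasure Q]
    (hKP : Integrable K P) (hKQ : Integrable K Q)
    {Ω : Type*} [MeasurableSpace Ω] (Pr : Measure Ω) [IsProbabilityMeasure Pr]
    (F : Ω → X → ℝ) (hFmeas : Measurable (Function.uncurry F))
    (hFint : ∀ ω, Integrable (F ω) P ∧ Integrable (F ω) Q)
    (hcov : ∀ x y : X, ∫ ω, F ω x * F ω y ∂Pr = ⟪K x, K y⟫) :
    P = Q ↔ (∀ᵐ ω ∂Pr, (∫ x, F ω x ∂P) = ∫ x, F ω x ∂Q) := by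
  refine ⟨fun hPQ => hPQ ▸ ae_of_all _ fun _ => rfl, fun h => hchar P Q inferInstance
    inferInstance (integral_eq_of_inner_sub_eq_zero hKP hKQ fun x => ?_)⟩
  set S := finiteSecondMomentSet F Pr
  have hS : MeasurableSet S := measurableSet_finiteSecondMomentSet hFmeas
  have hKS : ∀ y ∈ Sᶜ, K y = 0 := fun _ => eq_zero_of_notMem_finiteSecondMomentSet hFmeas hcov
  obtain ⟨e, he, hSc⟩ := IsCharacteristic.exists_setIntegral_eq_mul hchar
    (fun _ => hFmeas.of_uncurry_left) hcov hKS
  -- On `Sᶜ` both measures are multiples of one Dirac mass, so the difference on `S` is `c • e`.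
  have hdiff : ∀ᵐ ω ∂Pr, (∫ y in S, F ω y ∂P) - ∫ y in S, F ω y ∂Q
      = (Q.real Sᶜ - P.real Sᶜ) * e ω := by
    filter_upwards [h] with ω hω
    rw [sub_mul, ← hSc, ← hSc]
    linarith [integral_add_compl hS (hFint ω).1, integral_add_compl hS (hFint ω).2]
  by_cases hx : x ∈ S
  · obtain ⟨hiP, hP⟩ := integral_setIntegral_mul_eq_inner hFmeas hcov hbd P hKP hx
    obtain ⟨hiQ, hQ⟩ := integral_setIntegral_mul_eq_inner hFmeas hcov hbd Q hKQ hx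
    rw [inner_sub_left, ← hP, ← hQ, ← integral_sub hiP hiQ]
    calc ∫ ω, (∫ y in S, F ω y ∂P) * F ω x - (∫ y in S, F ω y ∂Q) * F ω x ∂Pr
        = ∫ ω, (Q.real Sᶜ - P.real Sᶜ) * (e ω * F ω x) ∂Pr :=
          integral_congr_ae (hdiff.mono fun ω hω => by simp only [← sub_mul, hω, mul_assoc])
      _ = 0 := by rw [integral_const_mul, he, mul_zero]
  · rw [hKS x hx, inner_zero_right]
end
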